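/- Back-end recursion for the Puiseux characteristic: let W = P R^ρ Q be a critical RVT code word, where P is empty or critical, ρ ≥ 1, and Q is a nonempty entirely critical string beginning with V. If PC(P) = [λ₀; λ₁, …, λ_g] and E(R^ρ Q) = [a;b], then PC(W) = [aλ₀; aλ₁, …, aλ_g, aλ_g + b − 2a]. -/

import Mathlib

/-- The three symbols of an RVT code word. -/
inductive RVT : Type
  | R | V | T
deriving DecidableEq, Repr

/-- Replace a leading run of `T`'s by `R`'s. -/
def deT : List RVT → List RVT
  | RVT.T :: xs => RVT.R :: deT xs
  | xs => xs

/-- If the word begins with `V`, replace that `V` and the immediately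
following `T`'s by `R`'s. -/
def reg : List RVT → List RVT
  | RVT.V :: xs => RVT.R :: deT xs
  | xs => xs

/-- The lifted word `L(W)`: remove the first symbol (an `R`), then replace a
leading maximal critical block `V Tᵗ` by `R^(t+1)`. -/
def lift (w : List RVT) : List RVT := reg w.tail

/-- Length of the leading run of `T`'s. -/
def countT : List RVT → ℕ
  | RVT.T :: xs => countT xs + 1
  | _ => 0

/-- Fueled version of the front-end recursion for the Puiseux characteristic
(Theorem PCfront): base case `[1]` on all-`R` words; given
`PC(L(W)) = [l0; l1, ..., lg]`,
(A) if `W` begins `RR` then `PC(W) = [l0; l1+l0, ..., lg+l0]`;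
(B) if `W` begins `R V T^t R` or `W = R V T^t` then
`PC(W) = [(t+2)l0; (t+3)l0, l1+l0, ..., lg+l0]`;
(C) if `W` begins `R V T^t V` then `PC(W) = [l1; l1+l0, ..., lg+l0]`. -/
def PCf : ℕ → List RVT → List ℕ
  | 0, _ => [1]
  | _ + 1, [] => [1]
  | fuel + 1, w@(_ :: rest) =>
    if w.all (· = RVT.R) then [1]
    else
      let p := PCf fuel (lift w)
      let l0 := p.headD 1
      let tl := p.tail
      match rest with
      | RVT.V :: xs =>
        match xs.drop (countT xs) with
        | RVT.V :: _ => tl.headD 1 :: tl.map (· + l0)                                -- case (C)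
        | _ => ((countT xs + 2) * l0) :: ((countT xs + 3) * l0) :: tl.map (· + l0)   -- case (B)
      | _ => l0 :: tl.map (· + l0)                                                   -- case (A)

/-- The Puiseux characteristic `PC(W)` computed by the front-end recursion. -/
def PC (w : List RVT) : List ℕ := PCf w.length w

/-- A valid RVT code word: begins with `R`, and `T` occurs only immediately
after a `V` or a `T`. -/
def ValidRVT (w : List RVT) : Prop :=
  w.head? = some RVT.R ∧
  ∀ i, w[i + 1]? = some RVT.T → (w[i]? = some RVT.V ∨ w[i]? = some RVT.T)

/-- The function `E` on strings, with `E_T[a;b] = [a;a+b]`, `E_V[a;b] = [b;a+b]`,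
`E_R = E_T`, and base value `E(empty) = [1;2]`; the leftmost symbol acts last. -/
def Efun : List RVT → ℕ × ℕ
  | [] => (1, 2)
  | RVT.V :: q => ((Efun q).2, (Efun q).1 + (Efun q).2)
  | _ :: q => ((Efun q).1, (Efun q).1 + (Efun q).2)

/-- The Euclidean-type recursion: `Euc(1,2)` is the empty word; for coprime
`a < b`, if `b < 2a` then `Euc(a,b) = V · Euc(b-a,a)`, and if `b > 2a` then
`Euc(a,b) = T · Euc(a,b-a)`. -/
def Euc (a b : ℕ) : List RVT :=
  if a = 1 ∧ b = 2 then []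
  else if _h1 : 0 < a ∧ a < b ∧ b < 2 * a then RVT.V :: Euc (b - a) a
  else if _h2 : 0 < a ∧ a < b ∧ 2 * a < b then RVT.T :: Euc a (b - a)
  else []
termination_by a + b
decreasing_by all_goals omega

/-!
Write `Y = R^ρ Q` and `E(Y) = [a; b]`. Lifting `P Y` only rewrites inside `P`, so the front-end
recursion for `PC(P Y)` runs through the same rules (A), (B), (C) as the one for `PC(P)`, and each
rule commutes with `L ↦ a·L ++ [a·last(L) + b − 2a]` on lists of length at least two. The recursion
for `P` stops at `P = R V Tᵗ`, where `PC(P) = [t+2; t+3]` and `L(P Y) = Rᵗ⁺¹ Y`; there one uses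
`PC(R^k Q) = [E₁; E₂ − E₁]` for `E(R^k Q) = [E₁; E₂]`, proved along the same recursion.
-/

open List

namespace RVT

theorem exists_replicate_T_append (xs : List RVT) :
    ∃ t rest, xs = replicate t T ++ rest ∧ rest.head? ≠ some T := by
  induction xs with
  | nil => exact ⟨0, [], rfl, by simp⟩
  | cons x xs ih =>
    cases x
    case T =>
      obtain ⟨t, rest, rfl, h⟩ := ih
      exact ⟨t + 1, rest, rfl, h⟩
    all_goals exact ⟨0, _, rfl, by simp⟩

theorem countT_replicate_T_append (t : ℕ) {rest : List RVT} (h : rest.head? ≠ some T) :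
    countT (replicate t T ++ rest) = t := by
  induction t with
  | zero => rcases rest with _ | ⟨_ | _ | _, _⟩ <;> simp_all [countT]
  | succ t ih => simp [replicate_succ, countT, ih]

theorem deT_replicate_T_append (t : ℕ) {rest : List RVT} (h : rest.head? ≠ some T) :
    deT (replicate t T ++ rest) = replicate t R ++ rest := by
  induction t with
  | zero => rcases rest with _ | ⟨_ | _ | _, _⟩ <;> simp_all [deT]
  | succ t ih => simp [replicate_succ, deT, ih]

theorem lift_cons_V (x : RVT) (t : ℕ) {rest : List RVT} (h : rest.head? ≠ some T) :
    lift (x :: V :: (replicate t T ++ rest)) = replicate (t + 1) R ++ rest := by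
  simp [lift, reg, deT_replicate_T_append t h, replicate_succ]

theorem length_deT (w : List RVT) : (deT w).length = w.length := by
  induction w with
  | nil => rfl
  | cons x w ih => cases x <;> simp [deT, ih]

theorem length_lift (x : RVT) (rest : List RVT) : (lift (x :: rest)).length = rest.length := by
  rcases rest with _ | ⟨_ | _ | _, _⟩ <;> simp [lift, reg, length_deT]

theorem validRVT_iff {w : List RVT} :
    ValidRVT w ↔ w.head? = some R ∧ w.IsChain (fun x y => y = T → x = V ∨ x = T) := by
  rw [ValidRVT, isChain_iff_getElem]
  refine and_congr_right fun _ => ⟨fun h i hi hT => ?_, fun h i hT => ?_⟩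
  · simpa [getElem?_eq_getElem (Nat.lt_of_succ_lt hi)] using h i (by simp [hi, hT])
  · obtain ⟨hi, hT⟩ := List.getElem?_eq_some_iff.1 hT
    simpa [getElem?_eq_getElem (Nat.lt_of_succ_lt hi)] using h i hi hT

def IsCriticalWord (w : List RVT) : Prop :=
  ValidRVT w ∧ (w.getLast? = some V ∨ w.getLast? = some T)

/-- The lift `L(w)` is `R xs` in the first case, all `R` in the second, `Rᵗ⁺¹ c d` in the third. -/
theorem IsCriticalWord.cases {w : List RVT} (hw : IsCriticalWord w) :
    (∃ xs, w = R :: R :: xs ∧ IsCriticalWord (R :: xs)) ∨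
    (∃ t, w = R :: V :: replicate t T) ∨
    ∃ t c d, c ≠ T ∧ w = R :: V :: (replicate t T ++ c :: d) ∧
      IsCriticalWord (replicate (t + 1) R ++ c :: d) := by
  obtain ⟨hvalid, hlast⟩ := hw
  obtain ⟨hhead, hchain⟩ := validRVT_iff.1 hvalid
  rcases w with _ | ⟨x, _ | ⟨y, xs⟩⟩
  · simp at hhead
  · simp only [head?_cons, Option.some.injEq] at hhead
    simp [hhead] at hlast
  · obtain rfl : x = R := by simpa using hhead
    cases y
    case R =>
      exact .inl ⟨xs, rfl, validRVT_iff.2 ⟨rfl, hchain.tail⟩, by simpa using hlast⟩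
    case T => simp at hchain
    case V =>
      obtain ⟨t, _ | ⟨c, d⟩, rfl, hT⟩ := exists_replicate_T_append xs
      · exact .inr (.inl ⟨t, by simp⟩)
      · refine .inr (.inr ⟨t, c, d, by simpa using hT, rfl,
          validRVT_iff.2 ⟨by simp [replicate_succ], ?_⟩, ?_⟩)
        · refine isChain_append.2 ⟨isChain_replicate_of_rel _ (by simp), hchain.suffix ?_, ?_⟩
          · exact (suffix_append _ _).trans (suffix_cons _ _) |>.trans (suffix_cons _ _)
          · simp_all
        · rw [getLast?_append_of_ne_nil _ (cons_ne_nil _ _)]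
          rwa [← cons_append, ← cons_append, getLast?_append_of_ne_nil _ (cons_ne_nil _ _)]
            at hlast

theorem IsCriticalWord.exists_mem_ne_R {xs : List RVT} (hw : IsCriticalWord (R :: xs)) :
    ∃ s ∈ xs, s ≠ R := by
  obtain ⟨s, hs, hsR⟩ : ∃ s ∈ R :: xs, s ≠ R := by
    rcases hw.2 with h | h <;> exact ⟨_, mem_of_getLast? h, by decide⟩
  exact ⟨s, (mem_cons.1 hs).resolve_left hsR, hsR⟩

theorem Efun_replicate_R_append (k : ℕ) (z : List RVT) :
    Efun (replicate k R ++ z) = ((Efun z).1, (Efun z).2 + k * (Efun z).1) := by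
  induction k with
  | zero => simp
  | succ k ih => simp [replicate_succ, Efun, ih]; ring

theorem Efun_replicate_T_append (k : ℕ) (z : List RVT) :
    Efun (replicate k T ++ z) = ((Efun z).1, (Efun z).2 + k * (Efun z).1) := by
  induction k with
  | zero => simp
  | succ k ih => simp [replicate_succ, Efun, ih]; ring

theorem Efun_fst_pos_and_lt_snd (z : List RVT) : 0 < (Efun z).1 ∧ (Efun z).1 < (Efun z).2 := by
  induction z with
  | nil => simp [Efun]
  | cons x z ih => cases x <;> simp [Efun] <;> omega

theorem two_mul_fst_lt_snd_Efun_cons_R (z : List RVT) :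
    2 * (Efun (R :: z)).1 < (Efun (R :: z)).2 := by
  have := (Efun_fst_pos_and_lt_snd z).2
  simp only [Efun]
  omega

theorem PCf_length_lift (x : RVT) (rest : List RVT) :
    PCf rest.length (lift (x :: rest)) = PC (lift (x :: rest)) := by
  rw [PC, length_lift]

theorem PC_ne_nil (w : List RVT) : PC w ≠ [] := by
  rcases w with _ | ⟨x, rest⟩
  · simp [PC, PCf]
  · simp only [PC, length_cons, PCf]
    split_ifs
    · simp
    · split <;> [split <;> simp; simp]

theorem PC_replicate_R (k : ℕ) : PC (replicate k R) = [1] := by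
  cases k <;> simp [PC, PCf, replicate_succ]

theorem PC_cons_R_cons (x : RVT) {xs : List RVT} {l0 : ℕ} {tl : List ℕ}
    (h : ∃ s ∈ xs, s ≠ R) (hp : PC (R :: xs) = l0 :: tl) :
    PC (x :: R :: xs) = l0 :: tl.map (· + l0) := by
  have hall : (x :: R :: xs).all (· = R) = false := by simpa using fun _ => h
  rw [PC, length_cons, PCf, PCf_length_lift, show lift (x :: R :: xs) = R :: xs from rfl, hp]
  simp [hall]

theorem PC_cons_V_of_head_ne_V (x : RVT) (t : ℕ) {rest : List RVT} {l0 : ℕ} {tl : List ℕ}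
    (hT : rest.head? ≠ some T) (hV : rest.head? ≠ some V)
    (hp : PC (replicate (t + 1) R ++ rest) = l0 :: tl) :
    PC (x :: V :: (replicate t T ++ rest)) = (t + 2) * l0 :: (t + 3) * l0 :: tl.map (· + l0) := by
  rw [PC, length_cons, PCf, PCf_length_lift, lift_cons_V x t hT, hp]
  simp only [countT_replicate_T_append t hT, drop_left' length_replicate]
  rcases rest with _ | ⟨_ | _ | _, _⟩ <;> simp_all

theorem PC_cons_V_of_head_V (x : RVT) (t : ℕ) {rest : List RVT} {l0 : ℕ} {tl : List ℕ}
    (hp : PC (replicate (t + 1) R ++ V :: rest) = l0 :: tl) :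
    PC (x :: V :: (replicate t T ++ V :: rest)) = tl.headD 1 :: tl.map (· + l0) := by
  rw [PC, length_cons, PCf, PCf_length_lift, lift_cons_V x t (by simp), hp]
  simp [countT_replicate_T_append t (show (V :: rest).head? ≠ some T by simp),
    drop_left' length_replicate]

theorem PC_cons_V_replicate_T (x : RVT) (t : ℕ) :
    PC (x :: V :: replicate t T) = [t + 2, t + 3] := by
  have h := PC_cons_V_of_head_ne_V x t (rest := []) (by simp) (by simp)
    (by simpa using PC_replicate_R (t + 1))
  simpa using h

theorem head?_replicate_R_append {ρ : ℕ} (hρ : 1 ≤ ρ) (Q : List RVT) :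
    (replicate ρ R ++ Q).head? = some R := by
  simp [head?_append, head?_replicate, Nat.one_le_iff_ne_zero.mp hρ]

theorem PC_replicate_R_append {ρ : ℕ} {Q : List RVT} (hρ : 1 ≤ ρ)
    (hQ : ∀ s ∈ Q, s = V ∨ s = T) (hQhead : Q.head? = some V) :
    PC (replicate ρ R ++ Q) =
      [(Efun (replicate ρ R ++ Q)).1,
        (Efun (replicate ρ R ++ Q)).2 - (Efun (replicate ρ R ++ Q)).1] := by
  induction hn : ρ + Q.length using Nat.strong_induction_on generalizing ρ Q with
  | _ n ih =>
  obtain ⟨q, rfl⟩ : ∃ q, Q = V :: q := ⟨Q.tail, (cons_head?_tail hQhead).symm⟩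
  match ρ, hρ with
  | ρ + 2, _ =>
    have ih := ih _ (by omega) (ρ := ρ + 1) (by omega) hQ hQhead rfl
    simp only [replicate_succ, cons_append] at ih ⊢
    rw [PC_cons_R_cons R ⟨V, by simp, by decide⟩ ih]
    simp [Efun_replicate_R_append, Efun]
    ring
  | 1, _ =>
    obtain ⟨t, rest, rfl, hT⟩ := exists_replicate_T_append q
    rw [replicate_one, singleton_append]
    rcases rest with _ | ⟨c, d⟩
    · have hE : Efun (replicate t T) = (1, t + 2) := by
        simpa [Efun, add_comm] using Efun_replicate_T_append t []
      simp [PC_cons_V_replicate_T, Efun, hE]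
      omega
    · obtain rfl : c = V := by
        have := hQ c (by simp)
        simp_all
      have ih := ih _ (by simp at hn ⊢; omega) (ρ := t + 1) (Q := V :: d) (by omega)
        (fun s hs => hQ s (by simp_all)) rfl rfl
      obtain ⟨e1_pos, e1_lt⟩ := Efun_fst_pos_and_lt_snd (V :: d)
      rw [PC_cons_V_of_head_V R t ih]
      simp only [Efun, Efun_replicate_T_append, Efun_replicate_R_append, add_mul, one_mul,
        headD_cons, map_cons, map_nil, cons.injEq, and_true] at e1_pos e1_lt ⊢
      omega

theorem IsCriticalWord.two_le_length_PC {w : List RVT} (hw : IsCriticalWord w) :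
    2 ≤ (PC w).length := by
  induction hn : w.length using Nat.strong_induction_on generalizing w with
  | _ n ih =>
  rcases hw.cases with ⟨xs, rfl, hxs⟩ | ⟨t, rfl⟩ | ⟨t, c, d, hc, rfl, hcd⟩
  · obtain ⟨l0, tl, hp⟩ := exists_cons_of_ne_nil (PC_ne_nil (R :: xs))
    have := ih _ (by simp [← hn]) hxs rfl
    rw [hp] at this
    simpa [PC_cons_R_cons R hxs.exists_mem_ne_R hp] using this
  · simp [PC_cons_V_replicate_T]
  · obtain ⟨l0, tl, hp⟩ := exists_cons_of_ne_nil (PC_ne_nil (replicate (t + 1) R ++ c :: d))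
    cases c
    case T => exact absurd rfl hc
    case R => simp [PC_cons_V_of_head_ne_V R t (rest := R :: d) (by simp) (by simp) hp]
    case V =>
      have := ih _ (by simp [← hn]; omega) hcd rfl
      rw [hp] at this
      simpa [PC_cons_V_of_head_V R t hp] using this

theorem IsCriticalWord.exists_PC_eq_cons {w : List RVT} (hw : IsCriticalWord w) :
    ∃ l0 tl, PC w = l0 :: tl ∧ tl ≠ [] := by
  have h := hw.two_le_length_PC
  rcases hp : PC w with _ | ⟨l0, _ | ⟨l1, r⟩⟩ <;> simp_all

def backEnd (a c : ℕ) (l : List ℕ) : List ℕ := l.map (a * ·) ++ [a * l.getLastD 1 + c]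

theorem backEnd_cons (a c x : ℕ) {l : List ℕ} (hl : l ≠ []) :
    backEnd a c (x :: l) = a * x :: backEnd a c l := by
  obtain ⟨y, l, rfl⟩ := exists_cons_of_ne_nil hl
  simp [backEnd]

theorem backEnd_map_add (a c x : ℕ) {l : List ℕ} (hl : l ≠ []) :
    backEnd a c (l.map (· + x)) = (backEnd a c l).map (· + a * x) := by
  simp only [backEnd, map_append, map_map, map_cons, map_nil, getLastD_eq_getLast?, getLast?_map,
    getLast?_eq_some_getLast hl, Option.map_some, Option.getD_some]
  congr 1
  · exact map_congr_left fun y _ => mul_add a y x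
  · simp only [cons.injEq, and_true]; ring

theorem backEnd_cons_map_add (a c y x : ℕ) {l : List ℕ} (hl : l ≠ []) :
    backEnd a c (y :: l.map (· + x)) = a * y :: (backEnd a c l).map (· + a * x) := by
  rw [backEnd_cons _ _ _ (by simpa using hl), backEnd_map_add _ _ _ hl]

theorem PC_cons_V_replicate_T_append {ρ : ℕ} {Q : List RVT} (hρ : 1 ≤ ρ)
    (hQ : ∀ s ∈ Q, s = V ∨ s = T) (hQhead : Q.head? = some V) (t : ℕ) :
    PC (R :: V :: replicate t T ++ (replicate ρ R ++ Q)) =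
      backEnd (Efun (replicate ρ R ++ Q)).1
        ((Efun (replicate ρ R ++ Q)).2 - 2 * (Efun (replicate ρ R ++ Q)).1) [t + 2, t + 3] := by
  have hY := head?_replicate_R_append hρ Q
  have hbase := PC_replicate_R_append (ρ := t + 1 + ρ) (by omega) hQ hQhead
  rw [replicate_add, append_assoc] at hbase
  rw [cons_append, cons_append, PC_cons_V_of_head_ne_V R t (by simp [hY]) (by simp [hY]) hbase]
  obtain ⟨q1_pos, q1_lt⟩ := Efun_fst_pos_and_lt_snd Q
  have hρq : (Efun Q).1 ≤ ρ * (Efun Q).1 := Nat.le_mul_of_pos_left _ hρ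
  simp only [backEnd, Efun_replicate_R_append, map_cons, map_nil, getLastD_cons, getLastD_nil,
    cons_append, nil_append, cons.injEq, and_true]
  refine ⟨by ring, by ring, ?_⟩
  simp only [add_mul, one_mul, mul_comm (Efun Q).1]
  omega

theorem IsCriticalWord.PC_append {P : List RVT} (hP : IsCriticalWord P) {ρ : ℕ} {Q : List RVT}
    (hρ : 1 ≤ ρ) (hQ : ∀ s ∈ Q, s = V ∨ s = T) (hQhead : Q.head? = some V) :
    PC (P ++ (replicate ρ R ++ Q)) =
      backEnd (Efun (replicate ρ R ++ Q)).1
        ((Efun (replicate ρ R ++ Q)).2 - 2 * (Efun (replicate ρ R ++ Q)).1) (PC P) := by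
  induction hn : P.length using Nat.strong_induction_on generalizing P with
  | _ n ih =>
  rcases hP.cases with ⟨xs, rfl, hxs⟩ | ⟨t, rfl⟩ | ⟨t, c, d, hc, rfl, hcd⟩
  · obtain ⟨l0, tl, hp, htl⟩ := hxs.exists_PC_eq_cons
    have ihxs := ih _ (by simp [← hn]) hxs rfl
    rw [hp, backEnd_cons _ _ _ htl] at ihxs
    have hV : V ∈ xs ++ (replicate ρ R ++ Q) := by simp [mem_of_mem_head? hQhead]
    rw [cons_append, cons_append, PC_cons_R_cons R ⟨V, hV, by decide⟩ ihxs,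
      PC_cons_R_cons R hxs.exists_mem_ne_R hp, backEnd_cons_map_add _ _ _ _ htl]
  · rw [PC_cons_V_replicate_T_append hρ hQ hQhead, PC_cons_V_replicate_T]
  · obtain ⟨l0, tl, hp, htl⟩ := hcd.exists_PC_eq_cons
    have ihcd := ih _ (by simp [← hn]; omega) hcd rfl
    rw [hp, backEnd_cons _ _ _ htl] at ihcd
    simp only [append_assoc, cons_append] at ihcd ⊢
    cases c
    case T => exact absurd rfl hc
    case R =>
      rw [PC_cons_V_of_head_ne_V R t (by simp) (by simp) ihcd,
        PC_cons_V_of_head_ne_V R t (rest := R :: d) (by simp) (by simp) hp,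
        backEnd_cons _ _ _ (by simp), backEnd_cons_map_add _ _ _ _ htl]
      simp only [cons.injEq, and_true]
      exact ⟨mul_left_comm _ _ _, mul_left_comm _ _ _⟩
    case V =>
      obtain ⟨l1, r, rfl⟩ := exists_cons_of_ne_nil htl
      rw [PC_cons_V_of_head_V R t ihcd, PC_cons_V_of_head_V R t hp,
        backEnd_cons_map_add _ _ _ _ htl]
      simp [backEnd]

end RVT

open RVT

/-- Back-end recursion: for a critical word `W = P R^ρ Q` with `P` empty or
critical, `ρ ≥ 1`, and `Q` nonempty entirely critical beginning with `V`, if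
`PC(P) = [l0; l1, ..., lg]` and `E(R^ρ Q) = [a; b]`, then
`PC(W) = [a l0; a l1, ..., a lg, a lg + b − 2a]`. -/
theorem statement8 (P Q : List RVT) (ρ : ℕ) (hρ : 1 ≤ ρ)
    (hP : P = [] ∨ (ValidRVT P ∧
      (P.getLast? = some RVT.V ∨ P.getLast? = some RVT.T)))
    (hQ : ∀ s ∈ Q, s = RVT.V ∨ s = RVT.T)
    (hQhead : Q.head? = some RVT.V) :
    PC (P ++ List.replicate ρ RVT.R ++ Q) =
      (PC P).map (fun x => (Efun (List.replicate ρ RVT.R ++ Q)).1 * x) ++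
        [(Efun (List.replicate ρ RVT.R ++ Q)).1 * (PC P).getLastD 1 +
          (Efun (List.replicate ρ RVT.R ++ Q)).2 -
          2 * (Efun (List.replicate ρ RVT.R ++ Q)).1] := by
  have h2a : 2 * (Efun (replicate ρ R ++ Q)).1 ≤ (Efun (replicate ρ R ++ Q)).2 := by
    obtain ⟨k, rfl⟩ := Nat.exists_eq_add_of_le' hρ
    exact (two_mul_fst_lt_snd_Efun_cons_R (replicate k R ++ Q)).le
  rcases hP with rfl | hP
  · rw [nil_append, PC_replicate_R_append hρ hQ hQhead, show PC [] = [1] from rfl]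
    simp
    omega
  · rw [append_assoc, IsCriticalWord.PC_append hP hρ hQ hQhead, backEnd, Nat.add_sub_assoc h2a]
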